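/- Let λ ∈ (0, 1/2), T > 0, k ≥ e, and let μ, ν : [0, T] → [0, ∞) be continuous functions. Define ψ̄(x, m) := x·exp( m·(ln(1+x))^{λ+1/2} ) for x, m ∈ [0, ∞), and φ(s, x) := (x+k)·exp( μ(s)·(ln(x+k))^{λ+1/2} + ν(s) ). Then for all (s, x) ∈ [0, T] × [0, ∞): ψ̄(x, μ(s)) ≤ φ(s, x); and there exists a constant K > 0 such that for all (s, x) ∈ [0, T] × [0, ∞): φ(s, x) ≤ K·ψ̄(x, μ(s)) + K. -/
import Mathlib


/-- `ψ̄(x, m) = x·exp(m·(ln(1+x))^{λ+1/2})` (the weight in the case `λ ∈ (0,1/2)`). -/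
noncomputable def psiBar (lam x m : ℝ) : ℝ :=
  x * Real.exp (m * Real.log (1 + x) ^ (lam + 1 / 2))

lemma real_rpow_add_le_add_rpow {a b p : ℝ} (ha : 0 ≤ a) (hb : 0 ≤ b)
    (hp : 0 ≤ p) (hp1 : p ≤ 1) : (a + b) ^ p ≤ a ^ p + b ^ p := by
  lift a to NNReal using ha
  lift b to NNReal using hb
  have := NNReal.rpow_add_le_add_rpow a b hp hp1
  exact_mod_cast this

/-- Proposition 4.4: for `λ ∈ (0,1/2)`, `T > 0`, `k ≥ e` and continuous nonnegative
`μ, ν` on `[0,T]`, the function `φ(s,x) = (x+k)·exp(μ(s)·(ln(x+k))^{λ+1/2} + ν(s))`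
satisfies `ψ̄(x, μ(s)) ≤ φ(s, x) ≤ K·ψ̄(x, μ(s)) + K` for some constant `K > 0`. -/
theorem stmt_12 (lam T k : ℝ) (hlam : lam ∈ Set.Ioo (0 : ℝ) (1 / 2)) (hT : 0 < T)
    (hk : Real.exp 1 ≤ k)
    (μ ν : ℝ → ℝ)
    (hμc : ContinuousOn μ (Set.Icc 0 T)) (hμnn : ∀ s ∈ Set.Icc 0 T, 0 ≤ μ s)
    (hνc : ContinuousOn ν (Set.Icc 0 T)) (hνnn : ∀ s ∈ Set.Icc 0 T, 0 ≤ ν s)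
    (φ : ℝ → ℝ → ℝ)
    (hφ : ∀ s x, φ s x =
      (x + k) * Real.exp (μ s * Real.log (x + k) ^ (lam + 1 / 2) + ν s)) :
    (∀ s ∈ Set.Icc 0 T, ∀ x : ℝ, 0 ≤ x → psiBar lam x (μ s) ≤ φ s x) ∧
    ∃ K : ℝ, 0 < K ∧ ∀ s ∈ Set.Icc 0 T, ∀ x : ℝ, 0 ≤ x →
      φ s x ≤ K * psiBar lam x (μ s) + K := by
  obtain ⟨hlam0, hlam2⟩ := hlam
  set p : ℝ := lam + 1 / 2 with hp_def
  have hp0 : 0 < p := by simp only [hp_def]; linarith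
  have hp1 : p ≤ 1 := by simp only [hp_def]; linarith
  have h1e : (1 : ℝ) ≤ Real.exp 1 := by linarith [Real.add_one_le_exp 1]
  have hk1 : (1 : ℝ) ≤ k := le_trans h1e hk
  have hk0 : (0 : ℝ) < k := by linarith
  have hlogk : 0 ≤ Real.log k := Real.log_nonneg hk1
  -- bounds for μ and ν on the compact interval
  have hne : (Set.Icc (0:ℝ) T).Nonempty := ⟨0, by constructor <;> linarith⟩
  obtain ⟨s₀, hs₀, hM⟩ := isCompact_Icc.exists_isMaxOn hne hμc
  obtain ⟨s₁, hs₁, hN⟩ := isCompact_Icc.exists_isMaxOn hne hνc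
  set M : ℝ := μ s₀ with hM_def
  set N : ℝ := ν s₁ with hN_def
  have hM0 : 0 ≤ M := hμnn s₀ hs₀
  have hN0 : 0 ≤ N := hνnn s₁ hs₁
  constructor
  · -- lower bound
    intro s hs x hx
    rw [hφ, psiBar]
    have hμs : 0 ≤ μ s := hμnn s hs
    have hνs : 0 ≤ ν s := hνnn s hs
    have hlog : Real.log (1 + x) ≤ Real.log (x + k) :=
      Real.log_le_log (by linarith) (by linarith)
    have hrpow : Real.log (1 + x) ^ p ≤ Real.log (x + k) ^ p :=
      Real.rpow_le_rpow (Real.log_nonneg (by linarith)) hlog hp0.le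
    have hexp : Real.exp (μ s * Real.log (1 + x) ^ p) ≤
        Real.exp (μ s * Real.log (x + k) ^ p + ν s) := by
      apply Real.exp_le_exp.2
      have := mul_le_mul_of_nonneg_left hrpow hμs
      linarith
    exact mul_le_mul (by linarith) hexp (Real.exp_nonneg _) (by linarith)
  · -- upper bound
    refine ⟨(1 + k) * Real.exp (M * Real.log (1 + k) ^ p + N), by positivity, ?_⟩
    set K : ℝ := (1 + k) * Real.exp (M * Real.log (1 + k) ^ p + N) with hK_def
    have hKpos : 0 < K := by positivity
    intro s hs x hx
    have hμs : 0 ≤ μ s := hμnn s hs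
    have hνs : 0 ≤ ν s := hνnn s hs
    have hμM : μ s ≤ M := hM hs
    have hνN : ν s ≤ N := hN hs
    have hb0 : 0 ≤ Real.log (1 + x) := Real.log_nonneg (by linarith)
    have ha0 : 0 ≤ Real.log (x + k) := Real.log_nonneg (by linarith)
    have hlk1 : Real.log k ≤ Real.log (1 + k) := Real.log_le_log hk0 (by linarith)
    have hlk1' : Real.log k ^ p ≤ Real.log (1 + k) ^ p :=
      Real.rpow_le_rpow hlogk hlk1 hp0.le
    have hψ0 : 0 ≤ psiBar lam x (μ s) := by
      rw [psiBar]; positivity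
    rcases le_total x 1 with hx1 | hx1
    · -- small x : φ ≤ K
      have hla : Real.log (x + k) ≤ Real.log (1 + k) :=
        Real.log_le_log (by linarith) (by linarith)
      have hra : Real.log (x + k) ^ p ≤ Real.log (1 + k) ^ p :=
        Real.rpow_le_rpow ha0 hla hp0.le
      have hrb0 : 0 ≤ Real.log (1 + k) ^ p :=
        Real.rpow_nonneg (Real.log_nonneg (by linarith)) p
      have hexp : Real.exp (μ s * Real.log (x + k) ^ p + ν s) ≤
          Real.exp (M * Real.log (1 + k) ^ p + N) := by
        apply Real.exp_le_exp.2
        have h1 : μ s * Real.log (x + k) ^ p ≤ M * Real.log (1 + k) ^ p :=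
          mul_le_mul hμM hra (Real.rpow_nonneg ha0 p) hM0
        linarith
      have hφle : φ s x ≤ K := by
        rw [hφ, hK_def]
        exact mul_le_mul (by linarith) hexp (Real.exp_nonneg _) (by linarith)
      have : 0 ≤ K * psiBar lam x (μ s) := mul_nonneg hKpos.le hψ0
      linarith
    · -- large x : φ ≤ K * ψ̄
      -- log(x+k) ≤ log(1+x) + log k
      have hmul : x + k ≤ (1 + x) * k := by nlinarith
      have hlog : Real.log (x + k) ≤ Real.log (1 + x) + Real.log k := by
        calc Real.log (x + k) ≤ Real.log ((1 + x) * k) :=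
              Real.log_le_log (by linarith) hmul
          _ = Real.log (1 + x) + Real.log k :=
              Real.log_mul (by linarith) (ne_of_gt hk0)
      have hkey : Real.log (x + k) ^ p ≤
          Real.log (1 + x) ^ p + Real.log k ^ p := by
        calc Real.log (x + k) ^ p ≤ (Real.log (1 + x) + Real.log k) ^ p :=
              Real.rpow_le_rpow ha0 hlog hp0.le
          _ ≤ Real.log (1 + x) ^ p + Real.log k ^ p :=
              real_rpow_add_le_add_rpow hb0 hlogk hp0.le hp1
      have hexp : Real.exp (μ s * Real.log (x + k) ^ p + ν s) ≤
          Real.exp (μ s * Real.log (1 + x) ^ p) *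
            Real.exp (M * Real.log (1 + k) ^ p + N) := by
        rw [← Real.exp_add]
        apply Real.exp_le_exp.2
        have h1 : μ s * Real.log (x + k) ^ p ≤
            μ s * (Real.log (1 + x) ^ p + Real.log k ^ p) :=
          mul_le_mul_of_nonneg_left hkey hμs
        have h2 : μ s * Real.log k ^ p ≤ M * Real.log (1 + k) ^ p :=
          mul_le_mul hμM hlk1' (Real.rpow_nonneg hlogk p) hM0
        nlinarith
      have hxk : x + k ≤ (1 + k) * x := by nlinarith
      have hφle : φ s x ≤ K * psiBar lam x (μ s) := by
        rw [hφ, hK_def, psiBar]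
        calc (x + k) * Real.exp (μ s * Real.log (x + k) ^ p + ν s)
            ≤ ((1 + k) * x) * (Real.exp (μ s * Real.log (1 + x) ^ p) *
                Real.exp (M * Real.log (1 + k) ^ p + N)) := by
              apply mul_le_mul hxk hexp (Real.exp_nonneg _); positivity
          _ = (1 + k) * Real.exp (M * Real.log (1 + k) ^ p + N) *
                (x * Real.exp (μ s * Real.log (1 + x) ^ p)) := by ring
      linarith
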